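/- Let f ∈ ℂ[y¹,y²] be a polynomial depending only on y (viewed inside ℂ[z¹,z²,y¹,y²]), let g ∈ ℂ[z¹,z²,y¹,y²] be arbitrary, and let u = (u¹,u²) ∈ ℂ². Set (uz) := u¹z² − u²z¹ (this is u_α z^α in the ε-conventions) and (u∂_y)f := −(u¹ ∂f/∂y¹ + u² ∂f/∂y²) (this is u_α ε^{αβ} ∂f/∂y^β). Then, with [a,b]_⋆ := a⋆b − b⋆a and · the ordinary polynomial product, one has [f, (uz)·g]_⋆ = (uz)·[f,g]_⋆ + [ i·(u∂_y)f , g ]_⋆. (This is Lemma 1 of the paper in the sector without Klein operators.) -/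

import Mathlib

/-!
Lemma 1 of the paper (sector without Klein operators), realized on the
polynomial algebra ℂ[z¹,z²,y¹,y²] = `MvPolynomial (Fin 4) ℂ`, where the
variables `0, 1` are `z¹, z²` and `2, 3` are `y¹, y²`.
-/

open MvPolynomial

noncomputable section

abbrev P4 : Type := MvPolynomial (Fin 4) ℂ

/-- the variable `z^β`. -/
def zvar (β : Fin 2) : Fin 4 := ⟨β.val, by omega⟩

/-- the variable `y^β`. -/
def yvar (β : Fin 2) : Fin 4 := ⟨β.val + 2, by omega⟩

/-- The symplectic form: ε^{12} = 1, ε^{21} = −1, diagonal entries zero. -/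
def eps (a b : Fin 2) : ℂ :=
  if a = 0 ∧ b = 1 then 1 else if a = 1 ∧ b = 0 then -1 else 0

/-- `∂_{y^β} + ∂_{z^β}`. -/
def Dplus (β : Fin 2) (f : P4) : P4 :=
  pderiv (yvar β) f + pderiv (zvar β) f

/-- `∂_{y^γ} − ∂_{z^γ}`. -/
def Dminus (γ : Fin 2) (f : P4) : P4 :=
  pderiv (yvar γ) f - pderiv (zvar γ) f

/-- Iterated application of a family of operators. -/
def applyIter {k : ℕ} (D : Fin 2 → P4 → P4) (v : Fin k → Fin 2) (f : P4) : P4 :=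
  (List.ofFn v).foldr (fun b acc => D b acc) f

/-- The higher-spin star product
`f ⋆ g := Σ_{k≥0} (i^k/k!) Σ_{β,γ} ε^{β₁γ₁}⋯ε^{β_kγ_k}
  [(∂_y+∂_z)_{β₁}⋯(∂_y+∂_z)_{β_k} f]·[(∂_y−∂_z)_{γ₁}⋯(∂_y−∂_z)_{γ_k} g]`;
the sum over `k` is finite since each term with `k > totalDegree f` vanishes. -/
def hsStar (f g : P4) : P4 :=
  ∑ k ∈ Finset.range (f.totalDegree + 1),
    (Complex.I ^ k / (Nat.factorial k : ℂ)) •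
      ∑ idx : Fin k → Fin 2 × Fin 2,
        (∏ j, eps (idx j).1 (idx j).2) •
          (applyIter Dplus (fun j => (idx j).1) f *
            applyIter Dminus (fun j => (idx j).2) g)

/-- `(uz) := u¹z² − u²z¹ = u_α z^α`. -/
def uz (u : Fin 2 → ℂ) : P4 := C (u 0) * X (zvar 1) - C (u 1) * X (zvar 0)

/-- `(u∂_y)f := −(u¹ ∂f/∂y¹ + u² ∂f/∂y²)`. -/
def uDy (u : Fin 2 → ℂ) (f : P4) : P4 :=
  -((u 0) • pderiv (yvar 0) f + (u 1) • pderiv (yvar 1) f)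

/-! ### basic facts about pderiv on P4 -/

lemma pderiv_comm' (i j : Fin 4) (p : P4) :
    pderiv i (pderiv j p) = pderiv j (pderiv i p) := by
  by_cases h : i = j
  · subst h; rfl
  · induction p using MvPolynomial.induction_on' with
    | monomial s a =>
      simp only [pderiv_monomial]
      have h1 : (s - Finsupp.single j 1 : Fin 4 →₀ ℕ) i = s i := by
        simp [Finsupp.sub_apply, Finsupp.single_apply, Ne.symm h]
      have h2 : (s - Finsupp.single i 1 : Fin 4 →₀ ℕ) j = s j := by
        simp [Finsupp.sub_apply, Finsupp.single_apply, h]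
      have h3 : s - Finsupp.single j 1 - Finsupp.single i 1
          = s - Finsupp.single i 1 - Finsupp.single j 1 := by
        ext x; simp [Finsupp.sub_apply, Finsupp.single_apply]; omega
      rw [h1, h2, h3]; ring_nf
    | add p q hp hq => simp [map_add, hp, hq]

lemma pderiv_smul' (i : Fin 4) (a : ℂ) (p : P4) :
    pderiv i (a • p) = a • pderiv i p := by
  simp [smul_eq_C_mul, pderiv_C_mul]

/-- strict degree decrease for pderiv -/
lemma pderiv_eq_sum (i : Fin 4) (f : P4) :
    pderiv i f = ∑ d ∈ f.support, pderiv i (monomial d (coeff d f)) := by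
  conv_lhs => rw [f.as_sum]
  exact map_sum _ _ _

lemma pderiv_of_totalDegree_zero (i : Fin 4) (f : P4) (h : f.totalDegree = 0) :
    pderiv i f = 0 := by
  rw [pderiv_eq_sum]
  apply Finset.sum_eq_zero
  intro d hd
  have := (MvPolynomial.totalDegree_eq_zero_iff _ f).mp h d hd i
  simp [pderiv_monomial, this]

lemma pderiv_totalDegree_lt (i : Fin 4) (f : P4) :
    pderiv i f = 0 ∨ (pderiv i f).totalDegree < f.totalDegree := by
  by_cases hz : pderiv i f = 0
  · exact Or.inl hz
  right
  have htd : f.totalDegree ≠ 0 := fun h0 => hz (pderiv_of_totalDegree_zero i f h0)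
  rw [pderiv_eq_sum]
  apply lt_of_le_of_lt (totalDegree_finset_sum _ _)
  rw [Finset.sup_lt_iff (by exact Nat.pos_of_ne_zero htd)]
  intro d hd
  rw [pderiv_monomial]
  by_cases hdi : d i = 0
  · simp only [hdi, Nat.cast_zero, mul_zero, map_zero, totalDegree_zero]
    exact Nat.pos_of_ne_zero htd
  · apply lt_of_le_of_lt (totalDegree_monomial_le _ _)
    have hdec : d = (d - Finsupp.single i 1) + Finsupp.single i 1 := by
      ext x
      simp only [Finsupp.coe_add, Finsupp.coe_tsub, Pi.add_apply, Pi.sub_apply,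
        Finsupp.single_apply]
      split_ifs with h
      · subst h; omega
      · omega
    have hsum : d.sum (fun _ e => e)
        = (d - Finsupp.single i 1 : Fin 4 →₀ ℕ).sum (fun _ e => e)
          + (Finsupp.single i 1 : Fin 4 →₀ ℕ).sum (fun _ e => e) := by
      conv_lhs => rw [hdec]
      exact Finsupp.sum_add_index' (fun _ => rfl) (fun _ _ _ => rfl)
    have hone : (Finsupp.single i 1 : Fin 4 →₀ ℕ).sum (fun _ e => e) = 1 :=
      Finsupp.sum_single_index rfl
    have hdle : d.sum (fun _ e => e) ≤ f.totalDegree := le_totalDegree hd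
    simp only [Function.id_def]
    omega

/-! ### Dplus / Dminus basics -/

lemma Dplus_add (b : Fin 2) (p q : P4) : Dplus b (p + q) = Dplus b p + Dplus b q := by
  simp [Dplus, map_add]; ring

lemma Dminus_add (b : Fin 2) (p q : P4) : Dminus b (p + q) = Dminus b p + Dminus b q := by
  simp [Dminus, map_add]; ring

lemma Dplus_smul (b : Fin 2) (a : ℂ) (p : P4) : Dplus b (a • p) = a • Dplus b p := by
  simp [Dplus, pderiv_smul', smul_add]

lemma Dminus_smul (b : Fin 2) (a : ℂ) (p : P4) : Dminus b (a • p) = a • Dminus b p := by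
  simp [Dminus, pderiv_smul', smul_sub]

lemma Dplus_mul (b : Fin 2) (p q : P4) :
    Dplus b (p * q) = Dplus b p * q + p * Dplus b q := by
  simp [Dplus, pderiv_mul]; ring

lemma Dminus_mul (b : Fin 2) (p q : P4) :
    Dminus b (p * q) = Dminus b p * q + p * Dminus b q := by
  simp [Dminus, pderiv_mul]; ring

lemma Dplus_comm (a b : Fin 2) (p : P4) : Dplus a (Dplus b p) = Dplus b (Dplus a p) := by
  simp [Dplus, map_add, pderiv_comm']; ring

lemma Dminus_comm (a b : Fin 2) (p : P4) : Dminus a (Dminus b p) = Dminus b (Dminus a p) := by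
  simp [Dminus, map_sub, pderiv_comm']; ring

lemma pderiv_uz_y (b : Fin 2) (u : Fin 2 → ℂ) : pderiv (yvar b) (uz u) = 0 := by
  have h1 : yvar b ≠ zvar 1 := by simp [yvar, zvar, Fin.ext_iff]
  have h2 : yvar b ≠ zvar 0 := by fin_cases b <;> decide
  simp [uz, pderiv_mul, pderiv_C, Pi.single_apply, Ne.symm h1, Ne.symm h2]

def cplus (u : Fin 2 → ℂ) : Fin 2 → ℂ := fun b => if b = 0 then -(u 1) else u 0

lemma pderiv_uz_z (b : Fin 2) (u : Fin 2 → ℂ) :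
    pderiv (zvar b) (uz u) = C (cplus u b) := by
  have hzz : zvar 0 ≠ zvar 1 := by simp [zvar, Fin.ext_iff]
  fin_cases b <;>
    simp [uz, pderiv_C, Pi.single_apply, cplus, zvar, Fin.ext_iff]

lemma Dplus_uz (b : Fin 2) (u : Fin 2 → ℂ) : Dplus b (uz u) = C (cplus u b) := by
  simp [Dplus, pderiv_uz_y, pderiv_uz_z]

lemma Dminus_uz (b : Fin 2) (u : Fin 2 → ℂ) : Dminus b (uz u) = C (-(cplus u b)) := by
  simp [Dminus, pderiv_uz_y, pderiv_uz_z]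

/-! ### applyIter machinery -/

section ApplyIter

variable {D : Fin 2 → P4 → P4}

lemma applyIter_zero (v : Fin 0 → Fin 2) (f : P4) : applyIter D v f = f := by
  simp [applyIter]

lemma applyIter_cons {m : ℕ} (b : Fin 2) (w : Fin m → Fin 2) (f : P4) :
    applyIter D (Fin.cons b w) f = D b (applyIter D w f) := by
  simp [applyIter, List.ofFn_succ]

lemma applyIter_succ {m : ℕ} (v : Fin (m + 1) → Fin 2) (f : P4) :
    applyIter D v f = D (v 0) (applyIter D (Fin.tail v) f) := by
  conv_lhs => rw [← Fin.cons_self_tail v]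
  exact applyIter_cons _ _ _

section Smul
variable (hs : ∀ (b : Fin 2) (a : ℂ) (p : P4), D b (a • p) = a • D b p)
include hs

lemma applyIter_smul : ∀ {m : ℕ} (v : Fin m → Fin 2) (a : ℂ) (f : P4),
    applyIter D v (a • f) = a • applyIter D v f := by
  intro m
  induction m with
  | zero => intro v a f; simp [applyIter_zero]
  | succ m ih =>
    intro v a f
    rw [applyIter_succ, applyIter_succ, ih, hs]

lemma D_zero' (hs' : ∀ (b : Fin 2) (a : ℂ) (p : P4), D b (a • p) = a • D b p)
    (b : Fin 2) : D b 0 = 0 := by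
  have := hs' b 0 0
  simpa using this

lemma applyIter_zero_poly {m : ℕ} (v : Fin m → Fin 2) :
    applyIter D v (0 : P4) = 0 := by
  have := applyIter_smul hs v 0 0
  simpa using this

end Smul

section Add
variable (ha : ∀ (b : Fin 2) (p q : P4), D b (p + q) = D b p + D b q)
include ha

lemma applyIter_add : ∀ {m : ℕ} (v : Fin m → Fin 2) (f g : P4),
    applyIter D v (f + g) = applyIter D v f + applyIter D v g := by
  intro m
  induction m with
  | zero => intro v f g; simp [applyIter_zero]
  | succ m ih =>
    intro v f g
    rw [applyIter_succ, applyIter_succ, applyIter_succ, ih, ha]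

lemma D_sum {ι : Type*} (b : Fin 2) (hz : D b 0 = 0) (s : Finset ι) (F : ι → P4) :
    D b (∑ j ∈ s, F j) = ∑ j ∈ s, D b (F j) := by
  classical
  induction s using Finset.induction with
  | empty => simpa using hz
  | insert _ _ hnot ih =>
    rw [Finset.sum_insert hnot, Finset.sum_insert hnot, ha, ih]

end Add

section Comm
variable (hc : ∀ (a b : Fin 2) (p : P4), D a (D b p) = D b (D a p))
include hc

lemma applyIter_push : ∀ {m : ℕ} (v : Fin m → Fin 2) (b : Fin 2) (f : P4),
    applyIter D v (D b f) = D b (applyIter D v f) := by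
  intro m
  induction m with
  | zero => intro v b f; simp [applyIter_zero]
  | succ m ih =>
    intro v b f
    rw [applyIter_succ, applyIter_succ, ih, hc]

lemma insertNth_succ_eq {α : Type*} {m : ℕ} (j : Fin (m + 1)) (b : α)
    (w : Fin (m + 1) → α) :
    Fin.insertNth (α := fun _ => α) j.succ b w
      = Fin.cons (w 0) (Fin.insertNth (α := fun _ => α) j b (Fin.tail w)) := by
  funext t
  refine Fin.cases ?_ (fun i => ?_) t
  · rw [Fin.cons_zero, ← Fin.succ_succAbove_zero j, Fin.insertNth_apply_succAbove]
  · rw [Fin.cons_succ]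
    refine Fin.succAboveCases j ?_ (fun t' => ?_) i
    · rw [Fin.insertNth_apply_same, Fin.insertNth_apply_same]
    · rw [Fin.insertNth_apply_succAbove, ← Fin.succ_succAbove_succ,
        Fin.insertNth_apply_succAbove]
      rfl

lemma applyIter_insertNth : ∀ {m : ℕ} (j : Fin (m + 1)) (b : Fin 2)
    (w : Fin m → Fin 2) (f : P4),
    applyIter D (j.insertNth b w) f = applyIter D w (D b f) := by
  intro m
  induction m with
  | zero =>
    intro j b w f
    have hj : j = 0 := Fin.ext (by omega)
    rw [hj, Fin.insertNth_zero', applyIter_cons, applyIter_zero, applyIter_zero]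
  | succ m ih =>
    intro j b w f
    refine Fin.cases ?_ (fun j' => ?_) j
    · rw [Fin.insertNth_zero', applyIter_cons, applyIter_push hc]
    · rw [insertNth_succ_eq hc, applyIter_cons, ih]
      exact (applyIter_succ w (D b f)).symm

end Comm

end ApplyIter

section Leibniz

variable {D : Fin 2 → P4 → P4} {u : Fin 2 → ℂ} {s : Fin 2 → ℂ}
variable (hm : ∀ (b : Fin 2) (p q : P4), D b (p * q) = D b p * q + p * D b q)
variable (hs : ∀ (b : Fin 2) (a : ℂ) (p : P4), D b (a • p) = a • D b p)
variable (ha : ∀ (b : Fin 2) (p q : P4), D b (p + q) = D b p + D b q)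
variable (hu : ∀ b : Fin 2, D b (uz u) = C (s b))
include hm hs ha hu

lemma applyIter_mul_uz : ∀ {m : ℕ} (v : Fin (m + 1) → Fin 2) (g : P4),
    applyIter D v (uz u * g)
      = uz u * applyIter D v g
        + ∑ j : Fin (m + 1), s (v j) • applyIter D (fun t => v (j.succAbove t)) g := by
  intro m
  induction m with
  | zero =>
    intro v g
    rw [applyIter_succ v, applyIter_zero, hm, hu, applyIter_succ v g, applyIter_zero]
    simp only [Fin.sum_univ_succ, Finset.univ_eq_empty, Finset.sum_empty,
      applyIter_zero, smul_eq_C_mul, add_zero]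
    ring
  | succ m ih =>
    intro v g
    have hz : D (v 0) (0 : P4) = 0 := D_zero' hs hs (v 0)
    have hsucc : ∀ j : Fin (m + 1),
        applyIter D (fun t => v (j.succ.succAbove t)) g
          = D (v 0) (applyIter D (fun t => Fin.tail v (j.succAbove t)) g) := by
      intro j
      rw [show D (v 0) (applyIter D (fun t => Fin.tail v (j.succAbove t)) g)
            = applyIter D (Fin.cons (v 0) fun t => Fin.tail v (j.succAbove t)) g
          from (applyIter_cons _ _ _).symm]
      congr 1
      funext t
      refine Fin.cases ?_ (fun t' => ?_) t
      · rw [Fin.succ_succAbove_zero, Fin.cons_zero]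
      · rw [Fin.succ_succAbove_succ, Fin.cons_succ]
        rfl
    rw [applyIter_succ v, ih (Fin.tail v) g, ha, hm, hu, D_sum ha (v 0) hz]
    simp only [hs]
    conv_rhs => rw [Fin.sum_univ_succ]
    have hv0 : applyIter D v g = D (v 0) (applyIter D (Fin.tail v) g) := applyIter_succ v g
    rw [hv0]
    simp only [hsucc]
    simp only [show Fin.tail v = fun t => v t.succ from rfl, Fin.zero_succAbove,
      smul_eq_C_mul]
    ring

end Leibniz

/-! ### the inner sums -/

def Sk (k : ℕ) (f g : P4) : P4 :=
  ∑ idx : Fin k → Fin 2 × Fin 2,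
    (∏ j, eps (idx j).1 (idx j).2) •
      (applyIter Dplus (fun j => (idx j).1) f * applyIter Dminus (fun j => (idx j).2) g)

def termk (k : ℕ) (f g : P4) : P4 :=
  (Complex.I ^ k / (Nat.factorial k : ℂ)) • Sk k f g

lemma hsStar_def' (f g : P4) :
    hsStar f g = ∑ k ∈ Finset.range (f.totalDegree + 1), termk k f g := rfl

lemma Sk_zero (f g : P4) : Sk 0 f g = f * g := by
  simp [Sk, applyIter_zero]

lemma termk_zero (f g : P4) : termk 0 f g = f * g := by
  simp [termk, Sk_zero]

lemma Sk_smul_left (k : ℕ) (a : ℂ) (f g : P4) : Sk k (a • f) g = a • Sk k f g := by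
  simp only [Sk, applyIter_smul Dplus_smul, smul_mul_assoc, Finset.smul_sum]
  exact Finset.sum_congr rfl fun _ _ => smul_comm _ _ _

lemma termk_smul_left (k : ℕ) (a : ℂ) (f g : P4) :
    termk k (a • f) g = a • termk k f g := by
  rw [termk, termk, Sk_smul_left, smul_comm]

lemma Sk_smul_right (k : ℕ) (a : ℂ) (f g : P4) : Sk k f (a • g) = a • Sk k f g := by
  simp only [Sk, applyIter_smul Dminus_smul, mul_smul_comm, Finset.smul_sum]
  exact Finset.sum_congr rfl fun _ _ => smul_comm _ _ _

lemma termk_smul_right (k : ℕ) (a : ℂ) (f g : P4) :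
    termk k f (a • g) = a • termk k f g := by
  rw [termk, termk, Sk_smul_right, smul_comm]

/-! ### vanishing for large k -/

lemma Dplus_totalDegree_lt (b : Fin 2) (f : P4) :
    Dplus b f = 0 ∨ (Dplus b f).totalDegree < f.totalDegree := by
  rcases pderiv_totalDegree_lt (yvar b) f with h1 | h1 <;>
    rcases pderiv_totalDegree_lt (zvar b) f with h2 | h2
  · left; simp [Dplus, h1, h2]
  · right
    have : Dplus b f = pderiv (zvar b) f := by simp [Dplus, h1]
    rwa [this]
  · right
    have : Dplus b f = pderiv (yvar b) f := by simp [Dplus, h2]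
    rwa [this]
  · right
    exact lt_of_le_of_lt (totalDegree_add _ _) (max_lt h1 h2)

lemma tuple_eq_insertNth_last {α : Type*} {m : ℕ} (v : Fin (m + 1) → α) :
    v = Fin.insertNth (α := fun _ => α) (Fin.last m) (v (Fin.last m)) (Fin.init v) := by
  funext t
  refine Fin.succAboveCases (Fin.last m) ?_ (fun t' => ?_) t
  · rw [Fin.insertNth_apply_same]
  · rw [Fin.insertNth_apply_succAbove]
    simp [Fin.init, Fin.succAbove_last]

lemma applyIter_Dplus_vanish : ∀ (k : ℕ) (f : P4), f.totalDegree < k →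
    ∀ v : Fin k → Fin 2, applyIter Dplus v f = 0 := by
  intro k
  induction k with
  | zero => intro f h; omega
  | succ m ih =>
    intro f h v
    rw [tuple_eq_insertNth_last v, applyIter_insertNth Dplus_comm]
    rcases Dplus_totalDegree_lt (v (Fin.last m)) f with h0 | hlt
    · rw [h0, applyIter_zero_poly Dplus_smul]
    · exact ih _ (by omega) _

lemma termk_vanish (k : ℕ) (f g : P4) (h : f.totalDegree < k) : termk k f g = 0 := by
  simp [termk, Sk, applyIter_Dplus_vanish k f h]

lemma hsStar_eq_sum (f g : P4) (N : ℕ) (h : f.totalDegree < N) :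
    hsStar f g = ∑ k ∈ Finset.range N, termk k f g := by
  rw [hsStar_def']
  exact Finset.sum_subset (Finset.range_subset_range.mpr (by omega))
    (fun k _ hk => termk_vanish k f g (by simp at hk; omega))

/-! ### reindexing helpers -/

lemma comp_insertNth {α β : Type*} {m : ℕ} (φ : α → β) (j : Fin (m + 1)) (x : α)
    (r : Fin m → α) :
    (fun t => φ (Fin.insertNth (α := fun _ => α) j x r t))
      = Fin.insertNth (α := fun _ => β) j (φ x) (fun t => φ (r t)) := by
  funext t
  refine Fin.succAboveCases j ?_ (fun t' => ?_) t
  · rw [Fin.insertNth_apply_same, Fin.insertNth_apply_same]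
  · rw [Fin.insertNth_apply_succAbove, Fin.insertNth_apply_succAbove]

lemma sum_insertNth_split {M : Type*} [AddCommMonoid M] {m : ℕ} (j : Fin (m + 1))
    (F : (Fin (m + 1) → Fin 2 × Fin 2) → M) :
    ∑ idx : Fin (m + 1) → Fin 2 × Fin 2, F idx
      = ∑ p : Fin 2 × Fin 2, ∑ r : Fin m → Fin 2 × Fin 2,
          F (Fin.insertNth (α := fun _ => Fin 2 × Fin 2) j p r) := by
  exact ((Fintype.sum_equiv (Fin.insertNthEquiv (fun _ => Fin 2 × Fin 2) j)
      (fun x => F (j.insertNth x.1 x.2)) F (fun x => rfl)).symm).trans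
    (Fintype.sum_prod_type _)

lemma smul_reassoc (a b c : ℂ) (X Y : P4) :
    (a * b) • (X * (c • Y)) = b • (((a * c) • X) * Y) := by
  simp only [mul_smul_comm, smul_mul_assoc, smul_smul]
  congr 1
  ring

lemma smul_reassoc' (a b c : ℂ) (X Y : P4) :
    (a * b) • (c • (X * Y)) = b • (X * ((a * c) • Y)) := by
  simp only [mul_smul_comm, smul_smul]
  congr 1
  ring

/-! ### the key lemmas -/

section Key

variable (u : Fin 2 → ℂ)

/-- the polynomial `u_α ε^{αβ} (∂_y+∂_z)_β f` -/
def wM (f : P4) : P4 := (-(u 0)) • Dplus 0 f + (-(u 1)) • Dplus 1 f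

/-- the polynomial `u_α ε^{αβ} (∂_y−∂_z)_β f` -/
def wP (f : P4) : P4 := (-(u 0)) • Dminus 0 f + (-(u 1)) • Dminus 1 f

lemma wM_eq_uDy (f : P4) (hf : ∀ β : Fin 2, pderiv (zvar β) f = 0) :
    wM u f = uDy u f := by
  simp only [wM, uDy, Dplus, hf 0, hf 1, add_zero]
  module

lemma wP_eq_uDy (f : P4) (hf : ∀ β : Fin 2, pderiv (zvar β) f = 0) :
    wP u f = uDy u f := by
  simp only [wP, uDy, Dminus, hf 0, hf 1, sub_zero]
  module

lemma wM_comb {m : ℕ} (r1 : Fin m → Fin 2) (f : P4) :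
    ∑ p : Fin 2 × Fin 2,
        (eps p.1 p.2 * (-(cplus u p.2))) • applyIter Dplus r1 (Dplus p.1 f)
      = applyIter Dplus r1 (wM u f) := by
  rw [wM, applyIter_add Dplus_add, applyIter_smul Dplus_smul, applyIter_smul Dplus_smul,
    Fintype.sum_prod_type]
  simp only [Fin.sum_univ_two, eps, cplus]
  norm_num

lemma wP_comb {m : ℕ} (r2 : Fin m → Fin 2) (f : P4) :
    ∑ p : Fin 2 × Fin 2,
        (eps p.1 p.2 * cplus u p.1) • applyIter Dminus r2 (Dminus p.2 f)
      = applyIter Dminus r2 (wP u f) := by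
  rw [wP, applyIter_add Dminus_add, applyIter_smul Dminus_smul, applyIter_smul Dminus_smul,
    Fintype.sum_prod_type]
  simp only [Fin.sum_univ_two, eps, cplus]
  norm_num
  abel

lemma Sk_succ_right (m : ℕ) (f g : P4) :
    Sk (m + 1) f (uz u * g)
      = uz u * Sk (m + 1) f g + (m + 1) • Sk m (wM u f) g := by
  have hu' : ∀ b : Fin 2, Dminus b (uz u) = C ((fun b' => -(cplus u b')) b) :=
    fun b => Dminus_uz b u
  rw [Sk]
  simp only [applyIter_mul_uz Dminus_mul Dminus_smul Dminus_add hu']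
  simp only [mul_add, smul_add, Finset.sum_add_distrib]
  congr 1
  · -- the `uz`-part
    rw [Sk, Finset.mul_sum]
    refine Finset.sum_congr rfl fun idx _ => ?_
    rw [mul_left_comm, mul_smul_comm]
  · -- the extracted part
    simp only [Finset.mul_sum, Finset.smul_sum]
    rw [Finset.sum_comm]
    have hjval : ∀ j : Fin (m + 1),
        (∑ idx : Fin (m + 1) → Fin 2 × Fin 2,
          (∏ t, eps (idx t).1 (idx t).2) •
            (applyIter Dplus (fun t => (idx t).1) f *
              ((-(cplus u ((idx j).2))) •
                applyIter Dminus (fun t => (idx (j.succAbove t)).2) g)))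
          = Sk m (wM u f) g := by
      intro j
      rw [sum_insertNth_split j, Finset.sum_comm, Sk]
      refine Finset.sum_congr rfl fun r _ => ?_
      have hstep : ∀ p : Fin 2 × Fin 2,
          (∏ t, eps ((Fin.insertNth (α := fun _ => Fin 2 × Fin 2) j p r) t).1 ((Fin.insertNth (α := fun _ => Fin 2 × Fin 2) j p r) t).2) •
            (applyIter Dplus (fun t => ((Fin.insertNth (α := fun _ => Fin 2 × Fin 2) j p r) t).1) f *
              ((-(cplus u ((Fin.insertNth (α := fun _ => Fin 2 × Fin 2) j p r j).2))) •
                applyIter Dminus (fun t => ((Fin.insertNth (α := fun _ => Fin 2 × Fin 2) j p r) (j.succAbove t)).2) g))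
            = (∏ t, eps (r t).1 (r t).2) •
                (((eps p.1 p.2 * (-(cplus u p.2))) •
                    applyIter Dplus (fun t => (r t).1) (Dplus p.1 f)) *
                  applyIter Dminus (fun t => (r t).2) g) := by
        intro p
        have h1 : (∏ t, eps ((Fin.insertNth (α := fun _ => Fin 2 × Fin 2) j p r) t).1 ((Fin.insertNth (α := fun _ => Fin 2 × Fin 2) j p r) t).2)
            = eps p.1 p.2 * ∏ t, eps (r t).1 (r t).2 := by
          rw [Fin.prod_univ_succAbove _ j]
          simp [Fin.insertNth_apply_same, Fin.insertNth_apply_succAbove]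
        have h2 : (fun t => ((Fin.insertNth (α := fun _ => Fin 2 × Fin 2) j p r) t).1)
            = Fin.insertNth (α := fun _ => Fin 2) j p.1 (fun t => (r t).1) :=
          comp_insertNth Prod.fst j p r
        have h4 : (fun t => ((Fin.insertNth (α := fun _ => Fin 2 × Fin 2) j p r) (j.succAbove t)).2)
            = fun t => (r t).2 := by
          funext t; rw [Fin.insertNth_apply_succAbove]
        rw [h1, h2, h4, Fin.insertNth_apply_same,
          applyIter_insertNth Dplus_comm, smul_reassoc]
      rw [Finset.sum_congr rfl fun p _ => hstep p, ← Finset.smul_sum, ← Finset.sum_mul,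
        wM_comb]
    rw [Finset.sum_congr rfl fun j _ => hjval j, Finset.sum_const, Finset.card_univ,
      Fintype.card_fin]

lemma Sk_succ_left (m : ℕ) (f g : P4) :
    Sk (m + 1) (uz u * g) f
      = uz u * Sk (m + 1) g f + (m + 1) • Sk m g (wP u f) := by
  have hu' : ∀ b : Fin 2, Dplus b (uz u) = C ((fun b' => cplus u b') b) :=
    fun b => Dplus_uz b u
  rw [Sk]
  simp only [applyIter_mul_uz Dplus_mul Dplus_smul Dplus_add hu']
  simp only [add_mul, Finset.sum_mul, smul_add, Finset.sum_add_distrib]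
  congr 1
  · rw [Sk, Finset.mul_sum]
    refine Finset.sum_congr rfl fun idx _ => ?_
    rw [mul_assoc, mul_smul_comm]
  · simp only [smul_mul_assoc, Finset.smul_sum]
    rw [Finset.sum_comm]
    have hjval : ∀ j : Fin (m + 1),
        (∑ idx : Fin (m + 1) → Fin 2 × Fin 2,
          (∏ t, eps (idx t).1 (idx t).2) •
            ((cplus u ((idx j).1)) •
              (applyIter Dplus (fun t => (idx (j.succAbove t)).1) g *
                applyIter Dminus (fun t => (idx t).2) f)))
          = Sk m g (wP u f) := by
      intro j
      rw [sum_insertNth_split j, Finset.sum_comm, Sk]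
      refine Finset.sum_congr rfl fun r _ => ?_
      have hstep : ∀ p : Fin 2 × Fin 2,
          (∏ t, eps ((Fin.insertNth (α := fun _ => Fin 2 × Fin 2) j p r) t).1 ((Fin.insertNth (α := fun _ => Fin 2 × Fin 2) j p r) t).2) •
            ((cplus u ((Fin.insertNth (α := fun _ => Fin 2 × Fin 2) j p r j).1)) •
              (applyIter Dplus (fun t => ((Fin.insertNth (α := fun _ => Fin 2 × Fin 2) j p r) (j.succAbove t)).1) g *
                applyIter Dminus (fun t => ((Fin.insertNth (α := fun _ => Fin 2 × Fin 2) j p r) t).2) f))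
            = (∏ t, eps (r t).1 (r t).2) •
                (applyIter Dplus (fun t => (r t).1) g *
                  ((eps p.1 p.2 * cplus u p.1) •
                    applyIter Dminus (fun t => (r t).2) (Dminus p.2 f))) := by
        intro p
        have h1 : (∏ t, eps ((Fin.insertNth (α := fun _ => Fin 2 × Fin 2) j p r) t).1 ((Fin.insertNth (α := fun _ => Fin 2 × Fin 2) j p r) t).2)
            = eps p.1 p.2 * ∏ t, eps (r t).1 (r t).2 := by
          rw [Fin.prod_univ_succAbove _ j]
          simp [Fin.insertNth_apply_same, Fin.insertNth_apply_succAbove]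
        have h2 : (fun t => ((Fin.insertNth (α := fun _ => Fin 2 × Fin 2) j p r) t).2)
            = Fin.insertNth (α := fun _ => Fin 2) j p.2 (fun t => (r t).2) :=
          comp_insertNth Prod.snd j p r
        have h4 : (fun t => ((Fin.insertNth (α := fun _ => Fin 2 × Fin 2) j p r) (j.succAbove t)).1)
            = fun t => (r t).1 := by
          funext t; rw [Fin.insertNth_apply_succAbove]
        rw [h1, h2, h4, Fin.insertNth_apply_same,
          applyIter_insertNth Dminus_comm, smul_reassoc']
      rw [Finset.sum_congr rfl fun p _ => hstep p, ← Finset.smul_sum, ← Finset.mul_sum,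
        wP_comb]
    rw [Finset.sum_congr rfl fun j _ => hjval j, Finset.sum_const, Finset.card_univ,
      Fintype.card_fin]

lemma termk_succ_right (m : ℕ) (f g : P4) :
    termk (m + 1) f (uz u * g)
      = uz u * termk (m + 1) f g + Complex.I • termk m (wM u f) g := by
  rw [termk, Sk_succ_right, smul_add, termk, termk]
  congr 1
  · exact (mul_smul_comm _ _ _).symm
  · rw [← Nat.cast_smul_eq_nsmul ℂ, smul_smul, smul_smul]
    congr 1
    have h1 : ((Nat.factorial m : ℂ)) ≠ 0 :=
      Nat.cast_ne_zero.mpr (Nat.factorial_ne_zero m)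
    have h2 : ((m : ℂ) + 1) ≠ 0 := by
      have := Nat.cast_ne_zero (R := ℂ).mpr (Nat.succ_ne_zero m)
      push_cast at this
      exact this
    rw [pow_succ, Nat.factorial_succ]
    push_cast
    field_simp

lemma termk_succ_left (m : ℕ) (f g : P4) :
    termk (m + 1) (uz u * g) f
      = uz u * termk (m + 1) g f + Complex.I • termk m g (wP u f) := by
  rw [termk, Sk_succ_left, smul_add, termk, termk]
  congr 1
  · exact (mul_smul_comm _ _ _).symm
  · rw [← Nat.cast_smul_eq_nsmul ℂ, smul_smul, smul_smul]
    congr 1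
    have h1 : ((Nat.factorial m : ℂ)) ≠ 0 :=
      Nat.cast_ne_zero.mpr (Nat.factorial_ne_zero m)
    have h2 : ((m : ℂ) + 1) ≠ 0 := by
      have := Nat.cast_ne_zero (R := ℂ).mpr (Nat.succ_ne_zero m)
      push_cast at this
      exact this
    rw [pow_succ, Nat.factorial_succ]
    push_cast
    field_simp

lemma sum_termk_right (f g : P4) (hf : ∀ β : Fin 2, pderiv (zvar β) f = 0) (N : ℕ) :
    ∑ k ∈ Finset.range (N + 1), termk k f (uz u * g)
      = uz u * ∑ k ∈ Finset.range (N + 1), termk k f g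
        + ∑ k ∈ Finset.range N, termk k (Complex.I • uDy u f) g := by
  rw [Finset.sum_range_succ']
  conv_rhs => rw [Finset.sum_range_succ']
  simp only [termk_succ_right u, termk_zero, termk_smul_left, wM_eq_uDy u f hf]
  rw [Finset.sum_add_distrib, mul_add, Finset.mul_sum, mul_left_comm f (uz u) g]
  abel

lemma sum_termk_left (f g : P4) (hf : ∀ β : Fin 2, pderiv (zvar β) f = 0) (N : ℕ) :
    ∑ k ∈ Finset.range (N + 1), termk k (uz u * g) f
      = uz u * ∑ k ∈ Finset.range (N + 1), termk k g f
        + ∑ k ∈ Finset.range N, termk k g (Complex.I • uDy u f) := by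
  rw [Finset.sum_range_succ']
  conv_rhs => rw [Finset.sum_range_succ']
  simp only [termk_succ_left u, termk_zero, termk_smul_right, wP_eq_uDy u f hf]
  rw [Finset.sum_add_distrib, mul_add, Finset.mul_sum, mul_assoc (uz u) g f]
  abel

end Key

/-- **Lemma 1**: if `f` depends only on `y`, then
`[f, (uz)·g]_⋆ = (uz)·[f,g]_⋆ + [i·(u∂_y)f, g]_⋆`. -/
theorem lemma1_star_uz (f g : P4) (hf : ∀ β : Fin 2, pderiv (zvar β) f = 0)
    (u : Fin 2 → ℂ) :
    hsStar f (uz u * g) - hsStar (uz u * g) f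
      = uz u * (hsStar f g - hsStar g f)
        + (hsStar (Complex.I • uDy u f) g - hsStar g (Complex.I • uDy u f)) := by
  set N := f.totalDegree + (uz u * g).totalDegree + g.totalDegree
      + (Complex.I • uDy u f).totalDegree + 1 with hN
  rw [hsStar_eq_sum f (uz u * g) (N + 1) (by omega),
    hsStar_eq_sum (uz u * g) f (N + 1) (by omega),
    hsStar_eq_sum f g (N + 1) (by omega),
    hsStar_eq_sum g f (N + 1) (by omega),
    hsStar_eq_sum (Complex.I • uDy u f) g N (by omega),
    hsStar_eq_sum g (Complex.I • uDy u f) N (by omega)]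
  rw [sum_termk_right u f g hf N, sum_termk_left u f g hf N]
  ring


end
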